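/- arXiv:2402.09757 — 3 statements merged into one kernel-verified Lean document; each statement's English description precedes it below -/
import Mathlib

section
/- For any k₁, k₂ with 0 ≤ k₁, k₂ ≤ q−1 and any shift 0 < τ < q, the aperiodic cross-correlation sum of the codes ψ(S_{k₁}) and ψ(S_{k₂}) vanishes: Σ_{l=0}^{q−1} Σ_{i=0}^{q−1−τ} S_{k₁,l}(i)·conj(S_{k₂,l}(i+τ)) = 0. -/
open Complex Finset

noncomputable def gfTr (p r : ℕ) [Fact p.Prime] : GaloisField p r → ZMod p :=
  Algebra.trace (ZMod p) (GaloisField p r)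

/-- The additive character `χ_b(c) = exp(2πi·Tr(bc)/p)`. -/
noncomputable def chi (p r : ℕ) [Fact p.Prime] (b c : GaloisField p r) : ℂ :=
  Complex.exp (2 * Real.pi * Complex.I * ((gfTr p r (b * c)).val : ℂ) / p)

/-- `a(0) = 0` and `a(i) = α^{i-1}` for `i ≥ 1`. -/
noncomputable def aMap {p r : ℕ} [Fact p.Prime] (α : GaloisField p r) (i : ℕ) :
    GaloisField p r :=
  if i = 0 then 0 else α ^ (i - 1)

/-- The dot product `k·i` of the base-`p` digit vectors of `k` and `i`. -/
def dotDigits (p r k i : ℕ) : ℕ :=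
  ∑ j ∈ Finset.range r, (k / p ^ j % p) * (i / p ^ j % p)

/-- The sequence entries `S_{k,l}(i) = ω_p^{(k·i) + Tr(a(i)a(l))}`. -/
noncomputable def Skl (p r : ℕ) [Fact p.Prime] (α : GaloisField p r) (k l i : ℕ) : ℂ :=
  Complex.exp (2 * Real.pi * Complex.I / p) ^
    (dotDigits p r k i + (gfTr p r (aMap α i * aMap α l)).val)

/-!
After exchanging the two sums, fix `i`. The digit factors `ω^{k₁·i}` and `ω^{-k₂·(i+τ)}` do
not depend on `l`, and as `l` runs through `0, …, q-1` the element `a(l)` runs through `GF(q)`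
exactly once, since `α` has order `q - 1`. The remaining sum is therefore
`∑_{c ∈ GF(q)} χ_{a(i)}(c) · conj χ_{a(i+τ)}(c) = ∑_c ψ(Tr((a(i) - a(i+τ)) c))`
for the standard character `ψ` of `ZMod p`, and it vanishes because `a(i) ≠ a(i+τ)` and
`ψ ∘ Tr` is a primitive additive character of `GF(q)`.
-/

theorem Complex.exp_two_pi_I_div_pow_self {n : ℕ} (hn : n ≠ 0) :
    Complex.exp (2 * Real.pi * Complex.I / n) ^ n = 1 :=
  (Complex.isPrimitiveRoot_exp n hn).pow_eq_one

section

variable {p r : ℕ} [Fact p.Prime]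

variable (p r) in
noncomputable def traceChar : AddChar (GaloisField p r) ℂ :=
  (AddChar.zmodChar p (Complex.exp_two_pi_I_div_pow_self (Fact.out : p.Prime).ne_zero)
    ).compAddMonoidHom (Algebra.trace (ZMod p) (GaloisField p r)).toAddMonoidHom

theorem traceChar_apply (c : GaloisField p r) :
    traceChar p r c = Complex.exp (2 * Real.pi * Complex.I / p) ^ (gfTr p r c).val :=
  AddChar.zmodChar_apply
    (Complex.exp_two_pi_I_div_pow_self (Fact.out : p.Prime).ne_zero) _

theorem chi_eq_traceChar (b c : GaloisField p r) : chi p r b c = traceChar p r (b * c) := by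
  rw [traceChar_apply, chi, ← Complex.exp_nat_mul]
  ring_nf

theorem traceChar_isPrimitive : (traceChar p r).IsPrimitive := by
  refine AddChar.IsPrimitive.of_ne_one (AddChar.ne_one_iff.2 ?_)
  obtain ⟨c, hc⟩ := Algebra.trace_surjective (ZMod p) (GaloisField p r) 1
  have hp : p.Prime := Fact.out
  refine ⟨c, ?_⟩
  rw [traceChar_apply, gfTr, hc, ZMod.val_one, pow_one]
  exact (Complex.isPrimitiveRoot_exp p hp.ne_zero).ne_one hp.one_lt

theorem sum_chi_mul_conj_chi [Fintype (GaloisField p r)] {b b' : GaloisField p r} (h : b ≠ b') :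
    ∑ c, chi p r b c * starRingEnd ℂ (chi p r b' c) = 0 := by
  classical
  have hchar : ∀ c, chi p r b c * starRingEnd ℂ (chi p r b' c) = traceChar p r (c * (b - b')) :=
    fun c ↦ by
      rw [chi_eq_traceChar, chi_eq_traceChar, ← AddChar.map_neg_eq_conj,
        ← AddChar.map_add_eq_mul]
      ring_nf
  rw [sum_congr rfl fun c _ ↦ hchar c, AddChar.sum_mulShift _ traceChar_isPrimitive,
    if_neg (sub_ne_zero.2 h), Nat.cast_zero]

theorem Skl_eq_mul_chi (α : GaloisField p r) (k l i : ℕ) :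
    Skl p r α k l i =
      Complex.exp (2 * Real.pi * Complex.I / p) ^ dotDigits p r k i *
        chi p r (aMap α i) (aMap α l) := by
  rw [Skl, pow_add, chi_eq_traceChar, traceChar_apply]

theorem aMap_injOn {α : GaloisField p r} (hα : orderOf α = p ^ r - 1) :
    Set.InjOn (aMap α) (Set.Iio (p ^ r)) := by
  have hpow : Set.InjOn (α ^ ·) (Set.Iio (p ^ r - 1)) := hα ▸ pow_injOn_Iio_orderOf
  have hpow_ne : ∀ n, n + 1 < p ^ r → α ^ n ≠ 0 := fun n hn ↦
    pow_ne_zero n (by rintro rfl; rw [orderOf_zero] at hα; omega)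
  rintro (_ | x) hx (_ | y) hy hxy <;> simp only [Set.mem_Iio] at hx hy
  · rfl
  · exact absurd hxy.symm (by simpa [aMap] using hpow_ne y hy)
  · exact absurd hxy (by simpa [aMap] using hpow_ne x hx)
  · simp only [aMap, Nat.add_one_ne_zero, if_false, Nat.add_sub_cancel] at hxy
    rw [hpow (by simp only [Set.mem_Iio]; omega) (by simp only [Set.mem_Iio]; omega) hxy]

theorem sum_range_aMap [Fintype (GaloisField p r)] {M : Type*} [AddCommMonoid M] (hr : r ≠ 0)
    {α : GaloisField p r} (hα : orderOf α = p ^ r - 1) (f : GaloisField p r → M) :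
    ∑ l ∈ range (p ^ r), f (aMap α l) = ∑ c, f c := by
  classical
  have hinj : Set.InjOn (aMap α) (range (p ^ r)) := by
    simpa only [coe_range] using aMap_injOn hα
  have himage : (range (p ^ r)).image (aMap α) = univ := by
    refine eq_univ_of_card _ ?_
    rw [card_image_of_injOn hinj, card_range, Fintype.card_eq_nat_card, GaloisField.card p r hr]
  rw [← himage, sum_image hinj]

end

theorem stmt_8_general (p r : ℕ) [Fact p.Prime] (hr : 0 < r) (α : GaloisField p r)
    (hα : orderOf α = p ^ r - 1) (k₁ k₂ τ : ℕ)
    (hτ₀ : 0 < τ) :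
    ∑ l ∈ Finset.range (p ^ r), ∑ i ∈ Finset.range (p ^ r - τ),
      Skl p r α k₁ l i * (starRingEnd ℂ) (Skl p r α k₂ l (i + τ)) = 0 := by
  have := Fintype.ofFinite (GaloisField p r)
  rw [sum_comm]
  refine sum_eq_zero fun i hi ↦ ?_
  have hi : i + τ < p ^ r := by rw [mem_range] at hi; omega
  have hne : aMap α i ≠ aMap α (i + τ) := fun h ↦ by
    simpa [hτ₀.ne'] using aMap_injOn hα (by simp only [Set.mem_Iio]; omega) hi h
  simp only [Skl_eq_mul_chi, map_mul, map_pow, mul_mul_mul_comm _ (chi _ _ _ _), ← mul_sum]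
  rw [sum_range_aMap hr.ne' hα
      (fun c ↦ chi p r (aMap α i) c * starRingEnd ℂ (chi p r (aMap α (i + τ)) c)),
    sum_chi_mul_conj_chi hne, mul_zero]

/-- For any `k₁, k₂` and any shift `0 < τ < q`, the aperiodic cross-correlation sum of the
codes `ψ(S_{k₁})` and `ψ(S_{k₂})` vanishes. -/
theorem stmt_8 (p r : ℕ) [Fact p.Prime] (hr : 0 < r) (α : GaloisField p r)
    (hα : orderOf α = p ^ r - 1) (k₁ k₂ τ : ℕ) (h₁ : k₁ < p ^ r) (h₂ : k₂ < p ^ r)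
    (hτ₀ : 0 < τ) (hτ : τ < p ^ r) :
    ∑ l ∈ Finset.range (p ^ r), ∑ i ∈ Finset.range (p ^ r - τ),
      Skl p r α k₁ l i * (starRingEnd ℂ) (Skl p r α k₂ l (i + τ)) = 0 :=
  stmt_8_general p r hr α hα k₁ k₂ τ hτ₀
end

section
/- Let the extended sequences G^c_{k,l} of length q' = nq (with n = Π p_i) be defined by G^c_{k,l}(i') = S_{k,l}(i)·Π_{m=1}^{l} ω_{p_m}^{c_m i_m} where i' = i + i₁q + i₂p₁q + ... + i_l p_{l−1}⋯p₁ q. Then for shift τ = 0 and parameter tuples with (k, c) ≠ (k', c'), the cross-correlation sum Φ(ψ(G^c_k), ψ(G^{c'}_{k'}))(0) = 0. -/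
/-!
Writing `i' = i + q·d`, the entry `G^c_{k,l}(i')` is `S_{k,l}(i)` times a character `χ_c` of the
mixed-radix digits of `d`, so the correlation sum factors as
`(∑_l ∑_i S_{k,l}(i) · conj S_{k',l}(i)) · ∑_d χ_c(d) · conj χ_{c'}(d)`.
Summing a product over all digit vectors gives the product of the digitwise sums, and each digitwise
sum is a geometric sum of a root of unity. If `c ≠ c'`, the digit `t` with `c_t ≠ c'_t` makes the
second factor vanish. If `c = c'`, then `k ≠ k'`; for fixed `l` the trace parts of `S_{k,l}(i)` and
`S_{k',l}(i)` cancel, and a base-`p` digit where `k` and `k'` differ makes every inner sum vanish.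
-/

open Complex Finset

/-- The `t`-th mixed-radix digit of the part `i'/q`, with weights `q·∏_{j<t} p_j`. -/
def mixDigit {L : ℕ} (q : ℕ) (P : Fin L → ℕ) (t : Fin L) (i' : ℕ) : ℕ :=
  i' / (q * ∏ j ∈ Finset.Iio t, P j) % P t

/-- The extended sequence entries
`G^c_{k,l}(i') = S_{k,l}(i) · ∏_m ω_{p_m}^{c_m i_m}` where `i = i' % q`. -/
noncomputable def Gseq (p r : ℕ) [Fact p.Prime] (α : GaloisField p r) {L : ℕ}
    (P : Fin L → ℕ) (c : Fin L → ℕ) (k l i' : ℕ) : ℂ :=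
  Skl p r α k l (i' % p ^ r) *
    ∏ t : Fin L,
      Complex.exp (2 * Real.pi * Complex.I / (P t)) ^ (c t * mixDigit (p ^ r) P t i')

open scoped ComplexConjugate

theorem Fin.prod_Iio_eq_prod_castLE {M : Type*} [CommMonoid M] {n : ℕ} (i : Fin n)
    (f : Fin n → M) :
    ∏ j ∈ Iio i, f j = ∏ j : Fin i, f (Fin.castLE i.is_lt.le j) := by
  have : Iio i = univ.map (Fin.castLEEmb i.is_lt.le) := by
    ext j
    simp only [mem_Iio, mem_map, mem_univ, true_and, Fin.castLEEmb_apply]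
    exact ⟨fun h => ⟨⟨j, h⟩, rfl⟩, by rintro ⟨a, rfl⟩; exact a.is_lt⟩
  rw [this, prod_map]
  rfl

section MixedRadix

variable {M : Type*} [CommSemiring M]

theorem sum_range_prod_mixedRadix_digit {L : ℕ} (P : Fin L → ℕ) (f : Fin L → ℕ → M) :
    ∑ d ∈ range (∏ t, P t), ∏ t, f t (d / (∏ j ∈ Iio t, P j) % P t) =
      ∏ t, ∑ e ∈ range (P t), f t e := by
  classical
  simp_rw [← Fin.sum_univ_eq_sum_range, Fintype.prod_sum, ← finPiFinEquiv.sum_comp,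
    Fin.prod_Iio_eq_prod_castLE]
  refine sum_congr rfl fun x _ => prod_congr rfl fun t _ => ?_
  exact congrArg (fun y => f t (y t)) (finPiFinEquiv.symm_apply_apply x)

theorem sum_range_pow_prod_digit (p r : ℕ) (f : Fin r → ℕ → M) :
    ∑ d ∈ range (p ^ r), ∏ t : Fin r, f t (d / p ^ (t : ℕ) % p) =
      ∏ t, ∑ e ∈ range p, f t e := by
  simpa using sum_range_prod_mixedRadix_digit (fun _ => p) f

theorem sum_range_mul_mod_div (n q : ℕ) (F H : ℕ → M) :
    ∑ i ∈ range (n * q), F (i % q) * H (i / q) = (∑ i ∈ range q, F i) * ∑ d ∈ range n, H d := by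
  rw [sum_mul_sum, ← Fin.sum_univ_eq_sum_range (fun i => F (i % q) * H (i / q)),
    ← finProdFinEquiv.sum_comp, Fintype.sum_prod_type, sum_comm,
    ← Fin.sum_univ_eq_sum_range (fun i => ∑ d ∈ range n, F i * H d)]
  refine sum_congr rfl fun i _ => ?_
  rw [← Fin.sum_univ_eq_sum_range (fun d => F i * H d)]
  refine sum_congr rfl fun d _ => ?_
  rw [finProdFinEquiv_apply_val, Nat.add_mul_mod_self_left, Nat.mod_eq_of_lt i.is_lt,
    Nat.add_mul_div_left _ _ i.pos, Nat.div_eq_of_lt i.is_lt, zero_add]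

end MixedRadix

theorem IsPrimitiveRoot.sum_pow_mul_conj_pow_eq_zero {ζ : ℂ} {m a b : ℕ}
    (hζ : IsPrimitiveRoot ζ m) (ha : a < m) (hb : b < m) (hab : a ≠ b) :
    ∑ e ∈ range m, ζ ^ (a * e) * conj (ζ ^ (b * e)) = 0 := by
  have hm : m ≠ 0 := by omega
  have hconj : conj ζ = ζ⁻¹ := (inv_eq_conj (hζ.norm'_eq_one hm)).symm
  have hu : ζ ^ a * (ζ ^ b)⁻¹ ≠ 1 := by
    rw [Ne, mul_inv_eq_one₀ (pow_ne_zero _ (hζ.ne_zero hm))]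
    exact fun h => hab (hζ.pow_inj ha hb h)
  have hum : (ζ ^ a * (ζ ^ b)⁻¹) ^ m = 1 := by
    rw [mul_pow, inv_pow, ← pow_mul, ← pow_mul, mul_comm a, mul_comm b, pow_mul, pow_mul,
      hζ.pow_eq_one, one_pow, one_pow, inv_one, mul_one]
  calc ∑ e ∈ range m, ζ ^ (a * e) * conj (ζ ^ (b * e))
      = ∑ e ∈ range m, (ζ ^ a * (ζ ^ b)⁻¹) ^ e := by
        refine sum_congr rfl fun e _ => ?_
        rw [map_pow, hconj, mul_pow, inv_pow, inv_pow, ← pow_mul, ← pow_mul]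
    _ = 0 := by rw [geom_sum_eq hu, hum, sub_self, zero_div]

theorem eq_of_forall_digit_eq {p r k k' : ℕ} (hk : k < p ^ r) (hk' : k' < p ^ r)
    (h : ∀ j : Fin r, k / p ^ (j : ℕ) % p = k' / p ^ (j : ℕ) % p) : k = k' := by
  have := finFunctionFinEquiv.symm.injective (a₁ := ⟨k, hk⟩) (a₂ := ⟨k', hk'⟩)
    (funext fun j => Fin.ext (by simpa using h j))
  exact congrArg Fin.val this

/-- The factor `∏_m ω_{p_m}^{c_m i_m}` of `G^c_{k,l}(i')`, as a function of `d = i' / q`. -/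
noncomputable def digitCharacter {L : ℕ} (P c : Fin L → ℕ) (d : ℕ) : ℂ :=
  ∏ t, exp (2 * Real.pi * I / P t) ^ (c t * (d / (∏ j ∈ Iio t, P j) % P t))

theorem sum_digitCharacter_mul_conj_eq_zero {L : ℕ} {P c c' : Fin L → ℕ}
    (hc : ∀ t, c t < P t) (hc' : ∀ t, c' t < P t) (hcc : c ≠ c') :
    ∑ d ∈ range (∏ t, P t), digitCharacter P c d * conj (digitCharacter P c' d) = 0 := by
  obtain ⟨t, ht⟩ := Function.ne_iff.mp hcc
  simp_rw [digitCharacter, map_prod, ← prod_mul_distrib]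
  rw [sum_range_prod_mixedRadix_digit P fun t e =>
    exp (2 * Real.pi * I / P t) ^ (c t * e) * conj (exp (2 * Real.pi * I / P t) ^ (c' t * e))]
  have hP : P t ≠ 0 := by have := hc t; omega
  exact prod_eq_zero (mem_univ t)
    ((isPrimitiveRoot_exp _ hP).sum_pow_mul_conj_pow_eq_zero (hc t) (hc' t) ht)

theorem Gseq_eq_Skl_mul_digitCharacter (p r : ℕ) [Fact p.Prime] (α : GaloisField p r) {L : ℕ}
    (P c : Fin L → ℕ) (k l i' : ℕ) :
    Gseq p r α P c k l i' = Skl p r α k l (i' % p ^ r) * digitCharacter P c (i' / p ^ r) := by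
  simp only [Gseq, digitCharacter, mixDigit, Nat.div_div_eq_div_mul]

theorem Skl_mul_conj_Skl (p r : ℕ) [Fact p.Prime] (α : GaloisField p r) (k k' l i : ℕ) :
    Skl p r α k l i * conj (Skl p r α k' l i) =
      ∏ j : Fin r, exp (2 * Real.pi * I / p) ^ (k / p ^ (j : ℕ) % p * (i / p ^ (j : ℕ) % p)) *
        conj (exp (2 * Real.pi * I / p) ^ (k' / p ^ (j : ℕ) % p * (i / p ^ (j : ℕ) % p))) := by
  set ω := exp (2 * Real.pi * I / p)
  have hp : p ≠ 0 := (Fact.out : p.Prime).ne_zero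
  have hω : ‖ω‖ = 1 := (isPrimitiveRoot_exp p hp).norm'_eq_one hp
  have hunit : ∀ n, ω ^ n * conj (ω ^ n) = 1 := fun n => by
    rw [mul_conj, normSq_eq_norm_sq, norm_pow, hω, one_pow, one_pow, ofReal_one]
  simp only [Skl, dotDigits, pow_add, map_mul]
  rw [mul_mul_mul_comm, hunit, mul_one, prod_mul_distrib, ← map_prod, prod_pow_eq_pow_sum,
    prod_pow_eq_pow_sum, Fin.sum_univ_eq_sum_range (fun j => k / p ^ j % p * (i / p ^ j % p)),
    Fin.sum_univ_eq_sum_range (fun j => k' / p ^ j % p * (i / p ^ j % p))]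

theorem sum_Skl_mul_conj_eq_zero (p r : ℕ) [Fact p.Prime] (α : GaloisField p r) {k k' : ℕ}
    (hk : k < p ^ r) (hk' : k' < p ^ r) (hkk : k ≠ k') (l : ℕ) :
    ∑ i ∈ range (p ^ r), Skl p r α k l i * conj (Skl p r α k' l i) = 0 := by
  obtain ⟨j, hj⟩ : ∃ j : Fin r, k / p ^ (j : ℕ) % p ≠ k' / p ^ (j : ℕ) % p := by
    by_contra! h
    exact hkk (eq_of_forall_digit_eq hk hk' h)
  have hp : 0 < p := (Fact.out : p.Prime).pos
  simp_rw [Skl_mul_conj_Skl]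
  rw [sum_range_pow_prod_digit p r fun j e =>
    exp (2 * Real.pi * I / p) ^ (k / p ^ (j : ℕ) % p * e) *
      conj (exp (2 * Real.pi * I / p) ^ (k' / p ^ (j : ℕ) % p * e))]
  exact prod_eq_zero (mem_univ j) ((isPrimitiveRoot_exp p hp.ne').sum_pow_mul_conj_pow_eq_zero
    (Nat.mod_lt _ hp) (Nat.mod_lt _ hp) hj)

theorem stmt_13_general (p r : ℕ) [Fact p.Prime] (α : GaloisField p r) {L : ℕ} (P : Fin L → ℕ)
    (k k' : ℕ) (hk : k < p ^ r) (hk' : k' < p ^ r)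
    (c c' : Fin L → ℕ) (hc : ∀ t, c t < P t) (hc' : ∀ t, c' t < P t)
    (hne : (k, c) ≠ (k', c')) :
    ∑ l ∈ Finset.range (p ^ r), ∑ i' ∈ Finset.range ((∏ t : Fin L, P t) * p ^ r),
      Gseq p r α P c k l i' * (starRingEnd ℂ) (Gseq p r α P c' k' l i') = 0 := by
  have hsplit : ∀ l, ∑ i' ∈ range ((∏ t, P t) * p ^ r),
      Gseq p r α P c k l i' * conj (Gseq p r α P c' k' l i') =
        (∑ i ∈ range (p ^ r), Skl p r α k l i * conj (Skl p r α k' l i)) *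
          ∑ d ∈ range (∏ t, P t), digitCharacter P c d * conj (digitCharacter P c' d) := by
    intro l
    rw [← sum_range_mul_mod_div]
    refine sum_congr rfl fun i' _ => ?_
    rw [Gseq_eq_Skl_mul_digitCharacter, Gseq_eq_Skl_mul_digitCharacter, map_mul,
      mul_mul_mul_comm]
  rw [sum_congr rfl fun l _ => hsplit l, ← sum_mul]
  rcases eq_or_ne c c' with rfl | hcc
  · have hkk : k ≠ k' := fun h => hne (by rw [h])
    rw [sum_eq_zero fun l _ => sum_Skl_mul_conj_eq_zero p r α hk hk' hkk l, zero_mul]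
  · rw [sum_digitCharacter_mul_conj_eq_zero hc hc' hcc, mul_zero]

/-- For `τ = 0` and distinct parameter tuples `(k,c) ≠ (k',c')`, the cross-correlation sum
of the extended codes vanishes. -/
theorem stmt_13 (p r : ℕ) [Fact p.Prime] (hr : 0 < r) (α : GaloisField p r)
    (hα : orderOf α = p ^ r - 1) {L : ℕ} (P : Fin L → ℕ) (hP : ∀ t, (P t).Prime)
    (k k' : ℕ) (hk : k < p ^ r) (hk' : k' < p ^ r)
    (c c' : Fin L → ℕ) (hc : ∀ t, c t < P t) (hc' : ∀ t, c' t < P t)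
    (hne : (k, c) ≠ (k', c')) :
    ∑ l ∈ Finset.range (p ^ r), ∑ i' ∈ Finset.range ((∏ t : Fin L, P t) * p ^ r),
      Gseq p r α P c k l i' * (starRingEnd ℂ) (Gseq p r α P c' k' l i') = 0 :=
  stmt_13_general p r α P k k' hk hk' c c' hc hc' hne
end

section
/- With the construction of Theorem 2, the code set T = {ψ(G^c_k) : 0 ≤ k ≤ q−1, 0 ≤ c_i ≤ p_i−1} contains exactly nq codes and forms an optimal (nq, q, nq, q)-ZCCS, with zero-correlation-zone width q, length nq, q sequences in each code, and nq codes, i.e., the bound s = m⌊l/z⌋ holds with equality: nq = q·⌊nq/q⌋ = q·n. -/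
set_option maxRecDepth 8000
open Complex Finset

noncomputable def om (m : ℕ) : ℂ := Complex.exp (2 * Real.pi * Complex.I / m)

lemma om_ne_zero (m : ℕ) : om m ≠ 0 := Complex.exp_ne_zero _

lemma om_pow_nat (m n : ℕ) : om m ^ n = Complex.exp (n * (2 * Real.pi * Complex.I / m)) :=
  (Complex.exp_nat_mul _ n).symm

lemma om_pow_eq_one_iff {m : ℕ} (hm : 0 < m) (n : ℕ) : om m ^ n = 1 ↔ m ∣ n := by
  rw [om_pow_nat, Complex.exp_eq_one_iff]
  have hm' : (m : ℂ) ≠ 0 := Nat.cast_ne_zero.2 hm.ne'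
  constructor
  · rintro ⟨k, hk⟩
    have key : (n : ℂ) * (2 * Real.pi * Complex.I) =
        ((k * m : ℤ) : ℂ) * (2 * Real.pi * Complex.I) := by
      have h1 : (n : ℂ) * (2 * Real.pi * Complex.I) =
          ((n : ℂ) * (2 * Real.pi * Complex.I / m)) * m := by field_simp
      rw [h1, hk]; push_cast; ring
    have h2 : (n : ℂ) = ((k * m : ℤ) : ℂ) := mul_right_cancel₀ Complex.two_pi_I_ne_zero key
    have h3 : (n : ℤ) = k * m := by exact_mod_cast h2
    exact Int.natCast_dvd_natCast.mp ⟨k, by rw [h3]; ring⟩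
  · rintro ⟨k, rfl⟩
    exact ⟨k, by push_cast; field_simp⟩

lemma om_pow_self {m : ℕ} (hm : 0 < m) : om m ^ m = 1 :=
  (om_pow_eq_one_iff hm m).2 dvd_rfl

lemma om_pow_inj_aux {m : ℕ} (hm : 0 < m) {a b : ℕ} (hb : b < m) (hab : a ≤ b)
    (h : om m ^ a = om m ^ b) : a = b := by
  have h1 : om m ^ a * om m ^ (b - a) = om m ^ a * 1 := by
    rw [mul_one, ← pow_add, Nat.add_sub_cancel' hab, h]
  have h2 : om m ^ (b - a) = 1 := mul_left_cancel₀ (pow_ne_zero _ (om_ne_zero m)) h1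
  have h3 := (om_pow_eq_one_iff hm _).1 h2
  have h4 : b - a = 0 := Nat.eq_zero_of_dvd_of_lt h3 (by omega)
  omega

lemma om_pow_inj {m : ℕ} (hm : 0 < m) {a b : ℕ} (ha : a < m) (hb : b < m)
    (h : om m ^ a = om m ^ b) : a = b := by
  rcases le_total a b with hab | hab
  · exact om_pow_inj_aux hm hb hab h
  · exact (om_pow_inj_aux hm ha hab h.symm).symm

lemma conj_om (m : ℕ) : (starRingEnd ℂ) (om m) = (om m)⁻¹ := by
  rw [om, ← Complex.exp_conj, ← Complex.exp_neg]
  congr 1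
  simp only [map_div₀, map_mul, Complex.conj_I, Complex.conj_ofReal, map_ofNat, map_natCast]
  ring

lemma conj_om_pow (m n : ℕ) : (starRingEnd ℂ) (om m ^ n) = (om m ^ n)⁻¹ := by
  rw [map_pow, conj_om, inv_pow]

lemma sum_range_mul' (f : ℕ → ℂ) (M B : ℕ) :
    ∑ i ∈ range (M * B), f i = ∑ b ∈ range B, ∑ a ∈ range M, f (M * b + a) := by
  induction B with
  | zero => simp
  | succ B ih =>
      rw [Nat.mul_succ, Finset.sum_range_add, ih, Finset.sum_range_succ]

lemma digit_sum_zero (Q : ℕ → ℕ) (hQ : ∀ j, 0 < Q j) (n : ℕ) (y : ℕ → ℂ)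
    (hy : ∀ j, j < n → y j ^ Q j = 1) (j₀ : ℕ) (hj₀ : j₀ < n) (hy₀ : y j₀ ≠ 1) :
    ∑ i ∈ range (∏ j ∈ range n, Q j),
      ∏ j ∈ range n, y j ^ (i / (∏ t ∈ range j, Q t) % Q j) = 0 := by
  set s := n - (j₀ + 1) with hs
  have hn : n = j₀ + 1 + s := by omega
  set A := ∏ j ∈ range j₀, Q j with hA
  set m := Q j₀ with hm
  set B := ∏ j ∈ range s, Q (j₀ + 1 + j) with hB
  have hApos : 0 < A := Finset.prod_pos fun j _ => hQ j
  have hmpos : 0 < m := hQ j₀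
  have htot : ∏ j ∈ range n, Q j = A * (m * B) := by
    rw [hn, Finset.prod_range_add, Finset.prod_range_succ]; ring
  rw [htot, sum_range_mul' _ A (m * B)]
  -- now sum over bb < m*B of sum over a < A
  have h2 : ∀ g : ℕ → ℂ, ∑ bb ∈ range (m * B), g bb
      = ∑ b ∈ range B, ∑ d ∈ range m, g (m * b + d) := fun g => sum_range_mul' g m B
  rw [show (∑ bb ∈ range (m * B), ∑ a ∈ range A, (fun i => ∏ j ∈ range n,
        y j ^ (i / (∏ t ∈ range j, Q t) % Q j)) (A * bb + a))
      = ∑ b ∈ range B, ∑ d ∈ range m, ∑ a ∈ range A, ∏ j ∈ range n,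
        y j ^ ((A * (m * b + d) + a) / (∏ t ∈ range j, Q t) % Q j) from
    h2 _]
  apply Finset.sum_eq_zero
  intro b hb
  have key : ∀ d ∈ range m, ∀ a ∈ range A,
      (∏ j ∈ range n, y j ^ ((A * (m * b + d) + a) / (∏ t ∈ range j, Q t) % Q j))
      = y j₀ ^ d *
        ((∏ j ∈ range j₀, y j ^ (a / (∏ t ∈ range j, Q t) % Q j)) *
         ∏ j ∈ range s, y (j₀ + 1 + j) ^ (b / (∏ t ∈ range j, Q (j₀ + 1 + t)) % Q (j₀ + 1 + j))) := by
    intro d hd a ha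
    rw [Finset.mem_range] at hd ha
    set i := A * (m * b + d) + a with hi
    have hieq : i = a + A * (m * b + d) := by omega
    rw [hn, Finset.prod_range_add, Finset.prod_range_succ]
    have hd0 : i / (∏ t ∈ range j₀, Q t) % Q j₀ = d := by
      rw [hieq, ← hA, Nat.add_mul_div_left _ _ hApos, Nat.div_eq_of_lt ha, zero_add,
        Nat.mul_add_mod, Nat.mod_eq_of_lt hd]
    have hfirst : ∀ j ∈ range j₀, y j ^ (i / (∏ t ∈ range j, Q t) % Q j)
        = y j ^ (a / (∏ t ∈ range j, Q t) % Q j) := by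
      intro j hj
      rw [Finset.mem_range] at hj
      congr 1
      obtain ⟨C, hAsplit⟩ : ∃ C, A = (∏ t ∈ range j, Q t) * (Q j * C) := by
        refine ⟨∏ t ∈ range (j₀ - j - 1), Q (j + (1 + t)), ?_⟩
        rw [hA, show j₀ = j + (1 + (j₀ - j - 1)) by omega, Finset.prod_range_add,
          Finset.prod_range_add, Finset.prod_range_one]
        norm_num
      have hW : 0 < ∏ t ∈ range j, Q t := Finset.prod_pos fun t _ => hQ t
      have hstep : i / (∏ t ∈ range j, Q t)
          = a / (∏ t ∈ range j, Q t) + Q j * (C * (m * b + d)) := by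
        rw [hieq, hAsplit,
          show (∏ t ∈ range j, Q t) * (Q j * C) * (m * b + d)
            = (∏ t ∈ range j, Q t) * (Q j * (C * (m * b + d))) by ring]
        exact Nat.add_mul_div_left _ _ hW
      rw [hstep, Nat.add_mul_mod_self_left]
    have hlast : ∀ t ∈ range s, y (j₀ + 1 + t) ^ (i / (∏ u ∈ range (j₀ + 1 + t), Q u) % Q (j₀ + 1 + t))
        = y (j₀ + 1 + t) ^ (b / (∏ u ∈ range t, Q (j₀ + 1 + u)) % Q (j₀ + 1 + t)) := by
      intro t ht
      congr 1
      have hWsplit : ∏ u ∈ range (j₀ + 1 + t), Q u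
          = (A * m) * ∏ u ∈ range t, Q (j₀ + 1 + u) := by
        rw [Finset.prod_range_add, Finset.prod_range_succ]
      have hiAm : i / (A * m) = b := by
        have hlt : a + A * d < A * m := by nlinarith
        have : i = (a + A * d) + (A * m) * b := by rw [hi]; ring
        rw [this, Nat.add_mul_div_left _ _ (Nat.mul_pos hApos hmpos),
          Nat.div_eq_of_lt hlt, zero_add]
      rw [hWsplit, ← Nat.div_div_eq_div_mul, hiAm]
    rw [Finset.prod_congr rfl hfirst, hd0,
      Finset.prod_congr rfl fun t ht => hlast t ht]
    ring
  rw [Finset.sum_congr rfl fun d hd => Finset.sum_congr rfl fun a ha => key d hd a ha]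
  have : ∀ d ∈ range m, ∑ a ∈ range A, (y j₀ ^ d * ((∏ j ∈ range j₀, y j ^ (a / (∏ t ∈ range j, Q t) % Q j)) *
         ∏ j ∈ range s, y (j₀ + 1 + j) ^ (b / (∏ t ∈ range j, Q (j₀ + 1 + t)) % Q (j₀ + 1 + j))))
      = y j₀ ^ d * ∑ a ∈ range A, ((∏ j ∈ range j₀, y j ^ (a / (∏ t ∈ range j, Q t) % Q j)) *
         ∏ j ∈ range s, y (j₀ + 1 + j) ^ (b / (∏ t ∈ range j, Q (j₀ + 1 + t)) % Q (j₀ + 1 + j))) := by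
    intro d _; rw [Finset.mul_sum]
  rw [Finset.sum_congr rfl this, ← Finset.sum_mul]
  have hgeom : ∑ d ∈ range m, y j₀ ^ d = 0 := by
    rw [geom_sum_eq hy₀ m, hy j₀ hj₀]
    simp
  rw [hgeom, zero_mul]

attribute [local instance] Fintype.ofFinite

lemma om_pow_mod {m : ℕ} (hm : 0 < m) (a : ℕ) : om m ^ (a % m) = om m ^ a := by
  conv_rhs => rw [← Nat.mod_add_div a m]
  rw [pow_add, pow_mul, om_pow_self hm, one_pow, mul_one]

/-- the character `ZMod p → ℂ` -/
noncomputable def psiZ (p : ℕ) (t : ZMod p) : ℂ := om p ^ t.val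

section psi
variable (p : ℕ) [Fact p.Prime]

lemma ppos : 0 < p := (Fact.out : p.Prime).pos

lemma psiZ_add (u v : ZMod p) : psiZ p (u + v) = psiZ p u * psiZ p v := by
  haveI : NeZero p := ⟨(Fact.out : p.Prime).ne_zero⟩
  rw [psiZ, psiZ, psiZ, ZMod.val_add, om_pow_mod (ppos p), pow_add]

lemma psiZ_zero : psiZ p 0 = 1 := by
  haveI : NeZero p := ⟨(Fact.out : p.Prime).ne_zero⟩
  rw [psiZ, ZMod.val_zero, pow_zero]

lemma psiZ_ne_zero (t : ZMod p) : psiZ p t ≠ 0 := pow_ne_zero _ (om_ne_zero p)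

lemma psiZ_eq_one_iff (t : ZMod p) : psiZ p t = 1 ↔ t = 0 := by
  haveI : NeZero p := ⟨(Fact.out : p.Prime).ne_zero⟩
  constructor
  · intro h
    have := (om_pow_eq_one_iff (ppos p) t.val).1 h
    have hlt := ZMod.val_lt t
    have : t.val = 0 := Nat.eq_zero_of_dvd_of_lt this hlt
    exact (ZMod.val_eq_zero t).1 this
  · rintro rfl; exact psiZ_zero p

lemma psiZ_neg (t : ZMod p) : psiZ p (-t) = (psiZ p t)⁻¹ := by
  have h : psiZ p (-t) * psiZ p t = 1 := by
    rw [← psiZ_add, neg_add_cancel, psiZ_zero]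
  exact eq_inv_of_mul_eq_one_left h

lemma conj_psiZ (t : ZMod p) : (starRingEnd ℂ) (psiZ p t) = psiZ p (-t) := by
  rw [psiZ, conj_om_pow, ← psiZ, psiZ_neg]

end psi

section field
variable (p r : ℕ) [Fact p.Prime]

lemma gf_card (hr : 0 < r) : Fintype.card (GaloisField p r) = p ^ r := by
  rw [← Nat.card_eq_fintype_card, GaloisField.card p r hr.ne']

lemma trace_nondeg {b : GaloisField p r} (hb : b ≠ 0) :
    ∃ y, gfTr p r (b * y) ≠ 0 := by
  by_contra h
  push_neg at h
  have := traceForm_nondegenerate (ZMod p) (GaloisField p r) |>.1 b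
  simp_rw [Algebra.traceForm_apply] at this
  exact hb (this fun y => h y)

lemma char_sum_zero {b : GaloisField p r} (hb : b ≠ 0) :
    ∑ x : GaloisField p r, psiZ p (gfTr p r (b * x)) = 0 := by
  obtain ⟨y, hy⟩ := trace_nondeg p r hb
  have hshift : ∑ x : GaloisField p r, psiZ p (gfTr p r (b * (x + y)))
      = ∑ x : GaloisField p r, psiZ p (gfTr p r (b * x)) :=
    Fintype.sum_equiv (Equiv.addRight y) _ _ (fun x => rfl)
  have hexp : ∀ x : GaloisField p r, psiZ p (gfTr p r (b * (x + y)))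
      = psiZ p (gfTr p r (b * y)) * psiZ p (gfTr p r (b * x)) := by
    intro x
    rw [mul_add, show gfTr p r (b * x + b * y) = gfTr p r (b * x) + gfTr p r (b * y) from
      map_add (Algebra.trace (ZMod p) (GaloisField p r)) _ _, psiZ_add, mul_comm]
  rw [Finset.sum_congr rfl fun x _ => hexp x, ← Finset.mul_sum] at hshift
  have hne : psiZ p (gfTr p r (b * y)) ≠ 1 := fun h => hy ((psiZ_eq_one_iff p _).1 h)
  by_contra hS
  exact hne ((mul_left_eq_self₀.mp hshift).resolve_right hS)

variable {α : GaloisField p r}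

lemma aMap_injOn_s14 (hr : 0 < r) (hα : orderOf α = p ^ r - 1) {i j : ℕ}
    (hi : i < p ^ r) (hj : j < p ^ r) (h : aMap α i = aMap α j) : i = j := by
  have hp1 : 1 < p := (Fact.out : p.Prime).one_lt
  have hq2 : 2 ≤ p ^ r := by
    calc 2 = 2 ^ 1 := rfl
    _ ≤ p ^ r := Nat.pow_le_pow_left hp1 1 |>.trans (Nat.pow_le_pow_right (by omega) hr)
  have hα0 : α ≠ 0 := by
    intro h0
    have h1 := pow_orderOf_eq_one α
    rw [hα, h0, zero_pow (by omega)] at h1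
    exact zero_ne_one h1
  -- helper for power injectivity
  have hpow : ∀ {a b : ℕ}, a ≤ b → b < p ^ r - 1 → α ^ a = α ^ b → a = b := by
    intro a b hab hb hE
    have h1 : α ^ a * α ^ (b - a) = α ^ a * 1 := by
      rw [mul_one, ← pow_add, Nat.add_sub_cancel' hab, hE]
    have h2 : α ^ (b - a) = 1 := mul_left_cancel₀ (pow_ne_zero _ hα0) h1
    have h3 := orderOf_dvd_of_pow_eq_one h2
    rw [hα] at h3
    have := Nat.eq_zero_of_dvd_of_lt h3 (by omega)
    omega
  rcases Nat.eq_zero_or_pos i with rfl | hi0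
  · rcases Nat.eq_zero_or_pos j with rfl | hj0
    · rfl
    · exfalso
      simp only [aMap, if_pos rfl, if_neg hj0.ne'] at h
      exact pow_ne_zero _ hα0 h.symm
  · rcases Nat.eq_zero_or_pos j with rfl | hj0
    · exfalso
      simp only [aMap, if_pos rfl, if_neg hi0.ne'] at h
      exact pow_ne_zero _ hα0 h
    · simp only [aMap, if_neg hi0.ne', if_neg hj0.ne'] at h
      rcases le_total (i - 1) (j - 1) with hle | hle
      · have := hpow hle (by omega) h
        omega
      · have := hpow hle (by omega) h.symm
        omega

lemma sum_aMap (hr : 0 < r) (hα : orderOf α = p ^ r - 1) (f : GaloisField p r → ℂ) :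
    ∑ l ∈ range (p ^ r), f (aMap α l) = ∑ x : GaloisField p r, f x := by
  have hinj : Set.InjOn (aMap α) ↑(range (p ^ r)) := by
    intro i hi j hj h
    simp only [Finset.coe_range, Set.mem_Iio] at hi hj
    exact aMap_injOn_s14 p r hr hα hi hj h
  classical
  have himg : (range (p ^ r)).image (aMap α) = Finset.univ := by
    apply Finset.eq_univ_of_card
    rw [Finset.card_image_of_injOn hinj, Finset.card_range, gf_card p r hr]
  rw [← himg, Finset.sum_image (fun i hi j hj h => hinj (by simpa using hi) (by simpa using hj) h)]

end field
def Qfun {L : ℕ} (P : Fin L → ℕ) (j : ℕ) : ℕ :=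
  if h : j < L then P ⟨j, h⟩ else 1

noncomputable def Yfun {L : ℕ} (P c c' : Fin L → ℕ) (j : ℕ) : ℂ :=
  if h : j < L then om (P ⟨j, h⟩) ^ (c ⟨j, h⟩) * (om (P ⟨j, h⟩) ^ (c' ⟨j, h⟩))⁻¹ else 1

lemma Qfun_pos {L : ℕ} (P : Fin L → ℕ) (hP : ∀ t, (P t).Prime) (j : ℕ) : 0 < Qfun P j := by
  rw [Qfun]
  split
  · exact (hP _).pos
  · exact one_pos

lemma finIio_prod {L : ℕ} (P : Fin L → ℕ) (t : Fin L) :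
    ∏ j ∈ Finset.Iio t, P j = ∏ j ∈ range t.val, Qfun P j := by
  refine (Finset.prod_bij (fun (j : ℕ) (hj : j ∈ range t.val) =>
    (⟨j, lt_trans (Finset.mem_range.1 hj) t.isLt⟩ : Fin L)) ?_ ?_ ?_ ?_).symm
  · intro j hj
    simp only [Finset.mem_Iio, Fin.lt_def]
    exact Finset.mem_range.1 hj
  · intro a ha b hb h
    simpa using congrArg Fin.val h
  · intro s hs
    refine ⟨s.val, Finset.mem_range.2 ?_, by simp⟩
    exact Fin.lt_iff_val_lt_val.mp (Finset.mem_Iio.1 hs)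
  · intro j hj
    simp [Qfun, lt_trans (Finset.mem_range.1 hj) t.isLt]

lemma prodQ_eq {L : ℕ} (P : Fin L → ℕ) :
    ∏ j ∈ range L, Qfun P j = ∏ t : Fin L, P t := by
  rw [Finset.prod_range fun j => Qfun P j]
  exact Finset.prod_congr rfl fun t _ => by simp [Qfun, t.isLt]

lemma Adecomp (p r k k' : ℕ) (a : ℕ) :
    om p ^ dotDigits p r k a * (om p ^ dotDigits p r k' a)⁻¹
      = ∏ j ∈ range r,
          (om p ^ (k / p ^ j % p) * (om p ^ (k' / p ^ j % p))⁻¹) ^ (a / p ^ j % p) := by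
  rw [dotDigits, dotDigits, ← Finset.prod_pow_eq_pow_sum, ← Finset.prod_pow_eq_pow_sum,
    ← Finset.prod_inv_distrib, ← Finset.prod_mul_distrib]
  refine Finset.prod_congr rfl fun j _ => ?_
  rw [pow_mul, pow_mul, ← inv_pow, ← mul_pow]

lemma Bdecomp (p r : ℕ) {L : ℕ} (P : Fin L → ℕ) (c c' : Fin L → ℕ) (i' : ℕ) :
    (∏ t : Fin L, om (P t) ^ (c t * mixDigit (p ^ r) P t i')) *
      (starRingEnd ℂ) (∏ t : Fin L, om (P t) ^ (c' t * mixDigit (p ^ r) P t i'))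
      = ∏ j ∈ range L,
          Yfun P c c' j ^ ((i' / p ^ r) / (∏ t ∈ range j, Qfun P t) % Qfun P j) := by
  rw [map_prod, ← Finset.prod_mul_distrib]
  rw [Finset.prod_range fun j => Yfun P c c' j ^ ((i' / p ^ r) / (∏ t ∈ range j, Qfun P t) % Qfun P j)]
  refine Finset.prod_congr rfl fun t _ => ?_
  rw [conj_om_pow, pow_mul, pow_mul, ← inv_pow, ← mul_pow]
  have h1 : mixDigit (p ^ r) P t i'
      = (i' / p ^ r) / (∏ u ∈ range t.val, Qfun P u) % Qfun P t.val := by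
    rw [mixDigit, ← finIio_prod, ← Nat.div_div_eq_div_mul]
    congr 1
    simp [Qfun, t.isLt]
  rw [h1]
  congr 1
  simp [Yfun, t.isLt]

lemma digits_differ {p : ℕ} (hp : 1 < p) :
    ∀ r k k', k < p ^ r → k' < p ^ r → k ≠ k' → ∃ j, j < r ∧ k / p ^ j % p ≠ k' / p ^ j % p := by
  intro r
  induction r with
  | zero => intro k k' hk hk' hne; simp at hk hk'; omega
  | succ r ih =>
      intro k k' hk hk' hne
      by_cases h0 : k % p = k' % p
      · have hdiv : k / p ≠ k' / p := by
          intro h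
          apply hne
          rw [← Nat.div_add_mod k p, ← Nat.div_add_mod k' p, h, h0]
        have hklt : k / p < p ^ r := by
          rw [Nat.div_lt_iff_lt_mul (by omega)]
          calc k < p ^ (r + 1) := hk
          _ = p ^ r * p := by rw [pow_succ]
        have hk'lt : k' / p < p ^ r := by
          rw [Nat.div_lt_iff_lt_mul (by omega)]
          calc k' < p ^ (r + 1) := hk'
          _ = p ^ r * p := by rw [pow_succ]
        obtain ⟨j, hj, hne'⟩ := ih (k / p) (k' / p) hklt hk'lt hdiv
        refine ⟨j + 1, by omega, ?_⟩
        have hd : ∀ m : ℕ, m / p ^ (j + 1) = m / p / p ^ j := by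
          intro m
          rw [Nat.div_div_eq_div_mul, ← pow_succ']
        rw [hd, hd]
        exact hne'
      · exact ⟨0, by omega, by simpa using h0⟩

lemma sum_l (p r : ℕ) [Fact p.Prime] (hr : 0 < r) {α : GaloisField p r}
    (hα : orderOf α = p ^ r - 1) (k k' i i2 : ℕ) (hi : i < p ^ r) (hi2 : i2 < p ^ r) :
    ∑ l ∈ range (p ^ r), Skl p r α k l i * (starRingEnd ℂ) (Skl p r α k' l i2)
      = if i = i2 then (p ^ r : ℂ) * (om p ^ dotDigits p r k i * (om p ^ dotDigits p r k' i2)⁻¹)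
        else 0 := by
  have hterm : ∀ l, Skl p r α k l i * (starRingEnd ℂ) (Skl p r α k' l i2)
      = (om p ^ dotDigits p r k i * (om p ^ dotDigits p r k' i2)⁻¹) *
        psiZ p (gfTr p r ((aMap α i - aMap α i2) * aMap α l)) := by
    intro l
    have e1 : Skl p r α k l i = om p ^ dotDigits p r k i *
        psiZ p (gfTr p r (aMap α i * aMap α l)) := by
      rw [Skl, psiZ, om, pow_add]
    have e2 : Skl p r α k' l i2 = om p ^ dotDigits p r k' i2 *
        psiZ p (gfTr p r (aMap α i2 * aMap α l)) := by
      rw [Skl, psiZ, om, pow_add]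
    rw [e1, e2, map_mul, conj_om_pow, conj_psiZ]
    have h4 : gfTr p r ((aMap α i - aMap α i2) * aMap α l)
        = gfTr p r (aMap α i * aMap α l) - gfTr p r (aMap α i2 * aMap α l) := by
      rw [sub_mul]
      exact map_sub (Algebra.trace (ZMod p) (GaloisField p r)) _ _
    have h5 : psiZ p (gfTr p r ((aMap α i - aMap α i2) * aMap α l))
        = psiZ p (gfTr p r (aMap α i * aMap α l)) *
          psiZ p (-(gfTr p r (aMap α i2 * aMap α l))) := by
      rw [h4, sub_eq_add_neg, psiZ_add]
    rw [h5]
    ring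
  rw [Finset.sum_congr rfl fun l _ => hterm l, ← Finset.mul_sum]
  rw [sum_aMap p r hr hα fun x => psiZ p (gfTr p r ((aMap α i - aMap α i2) * x))]
  by_cases h : i = i2
  · subst h
    rw [if_pos rfl]
    simp only [sub_self, zero_mul]
    have : gfTr p r (0 : GaloisField p r) = 0 :=
      map_zero (Algebra.trace (ZMod p) (GaloisField p r))
    rw [this]
    simp [psiZ_zero, gf_card p r hr]
    ring
  · rw [if_neg h]
    have hb : aMap α i - aMap α i2 ≠ 0 := by
      rw [sub_ne_zero]
      intro heq
      exact h (aMap_injOn_s14 p r hr hα hi hi2 heq)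
    rw [char_sum_zero p r hb, mul_zero]

lemma y_pow_eq_one {m : ℕ} (hm : 0 < m) (a b : ℕ) :
    (om m ^ a * (om m ^ b)⁻¹) ^ m = 1 := by
  rw [mul_pow, inv_pow, ← pow_mul, ← pow_mul, mul_comm a m, mul_comm b m, pow_mul, pow_mul,
    om_pow_self hm, one_pow, one_pow, inv_one, mul_one]

lemma y_ne_one {m a b : ℕ} (hm : 0 < m) (ha : a < m) (hb : b < m) (hne : a ≠ b) :
    om m ^ a * (om m ^ b)⁻¹ ≠ 1 := by
  intro h
  exact hne (om_pow_inj hm ha hb ((mul_inv_eq_one₀ (pow_ne_zero _ (om_ne_zero m))).mp h))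

lemma Asum_zero {p : ℕ} (hp : 1 < p) (r k k' : ℕ) (hk : k < p ^ r) (hk' : k' < p ^ r)
    (hne : k ≠ k') :
    ∑ a ∈ range (p ^ r), ∏ j ∈ range r,
      (om p ^ (k / p ^ j % p) * (om p ^ (k' / p ^ j % p))⁻¹) ^ (a / p ^ j % p) = 0 := by
  obtain ⟨j₀, hj₀, hdne⟩ := digits_differ hp r k k' hk hk' hne
  have h1 : k / p ^ j₀ % p < p := Nat.mod_lt _ (by omega)
  have h2 : k' / p ^ j₀ % p < p := Nat.mod_lt _ (by omega)
  have hp0 : 0 < p := lt_trans Nat.zero_lt_one hp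
  have h := digit_sum_zero (fun _ => p) (fun _ => hp0) r
    (fun j => om p ^ (k / p ^ j % p) * (om p ^ (k' / p ^ j % p))⁻¹)
    (fun j _ => y_pow_eq_one hp0 _ _) j₀ hj₀
    (y_ne_one hp0 h1 h2 hdne)
  simp only [Finset.prod_const, Finset.card_range] at h
  exact h

lemma Bsum_zero {L : ℕ} (P : Fin L → ℕ) (hP : ∀ t, (P t).Prime) (c c' : Fin L → ℕ)
    (hc : ∀ t, c t < P t) (hc' : ∀ t, c' t < P t) (hne : c ≠ c') :
    ∑ v ∈ range (∏ t : Fin L, P t), ∏ j ∈ range L,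
      Yfun P c c' j ^ (v / (∏ t ∈ range j, Qfun P t) % Qfun P j) = 0 := by
  obtain ⟨t₀, ht₀⟩ := Function.ne_iff.mp hne
  have h := digit_sum_zero (Qfun P) (Qfun_pos P hP) L (Yfun P c c')
    (fun j hj => by
      rw [Yfun, dif_pos hj, Qfun, dif_pos hj]
      exact y_pow_eq_one (hP _).pos _ _)
    t₀.val t₀.isLt
    (by
      rw [Yfun, dif_pos t₀.isLt]
      simp only [Fin.eta]
      exact y_ne_one (hP t₀).pos (hc t₀) (hc' t₀) ht₀)
  rw [prodQ_eq] at h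
  exact h

lemma Gseq_ne_zero (p r : ℕ) [Fact p.Prime] (α : GaloisField p r) {L : ℕ}
    (P : Fin L → ℕ) (c : Fin L → ℕ) (k l i' : ℕ) : Gseq p r α P c k l i' ≠ 0 := by
  rw [Gseq]
  exact mul_ne_zero (by rw [Skl]; exact pow_ne_zero _ (Complex.exp_ne_zero _))
    (Finset.prod_ne_zero_iff.2 fun t _ => pow_ne_zero _ (Complex.exp_ne_zero _))

lemma conj_Gseq (p r : ℕ) [Fact p.Prime] (α : GaloisField p r) {L : ℕ}
    (P : Fin L → ℕ) (c : Fin L → ℕ) (k l i' : ℕ) :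
    (starRingEnd ℂ) (Gseq p r α P c k l i') = (Gseq p r α P c k l i')⁻¹ := by
  rw [Gseq, map_mul, map_prod, mul_inv, ← Finset.prod_inv_distrib]
  congr 1
  · rw [Skl]
    exact conj_om_pow p _
  · exact Finset.prod_congr rfl fun t _ => conj_om_pow _ _

open scoped Classical in
/-- The code set `T` has `nq` codes and forms an optimal `(nq, q, nq, q)`-ZCCS:
all correlation sums vanish in the zero-correlation zone `|τ| < q` except the in-phase
auto-correlation, which equals `q²·n = (number of sequences)·(length)`, and the optimality
bound `s = m⌊L/z⌋`, i.e. `nq = q·⌊nq/q⌋`, is met with equality. -/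
theorem stmt_14 (p r : ℕ) [Fact p.Prime] (hr : 0 < r) (α : GaloisField p r)
    (hα : orderOf α = p ^ r - 1) {L : ℕ} (P : Fin L → ℕ) (hP : ∀ t, (P t).Prime) :
    (∀ (τ k k' : ℕ) (c c' : Fin L → ℕ), τ < p ^ r → k < p ^ r → k' < p ^ r →
      (∀ t, c t < P t) → (∀ t, c' t < P t) →
      ∑ l ∈ Finset.range (p ^ r), ∑ i' ∈ Finset.range ((∏ t : Fin L, P t) * p ^ r - τ),
        Gseq p r α P c k l i' * (starRingEnd ℂ) (Gseq p r α P c' k' l (i' + τ)) =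
        if τ = 0 ∧ k = k' ∧ c = c' then (p ^ r : ℂ) ^ 2 * (∏ t : Fin L, P t : ℕ) else 0) ∧
    (∏ t : Fin L, P t) * p ^ r = p ^ r * (((∏ t : Fin L, P t) * p ^ r) / p ^ r) := by
  have hppr : p.Prime := Fact.out
  have hp1 : 1 < p := hppr.one_lt
  have hq : 0 < p ^ r := pow_pos hppr.pos r
  constructor
  · intro τ k k' c c' hτ hk hk' hc hc'
    by_cases hd : τ = 0 ∧ k = k' ∧ c = c'
    · obtain ⟨rfl, rfl, rfl⟩ := hd
      rw [if_pos ⟨rfl, rfl, rfl⟩]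
      have hone : ∀ l i' : ℕ,
          Gseq p r α P c k l i' * (starRingEnd ℂ) (Gseq p r α P c k l (i' + 0)) = 1 := by
        intro l i'
        rw [add_zero, conj_Gseq, mul_inv_cancel₀ (Gseq_ne_zero p r α P c k l i')]
      rw [Finset.sum_congr rfl fun l _ => Finset.sum_congr rfl fun i' _ => hone l i']
      simp only [Finset.sum_const, Finset.card_range, nsmul_eq_mul, mul_one, Nat.sub_zero]
      push_cast
      ring
    · rw [if_neg hd, Finset.sum_comm]
      by_cases hτ0 : τ = 0
      · subst hτ0
        have hkc : k ≠ k' ∨ c ≠ c' := by tauto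
        simp only [add_zero, Nat.sub_zero]
        have hinner : ∀ i' : ℕ,
            (∑ l ∈ range (p ^ r),
              Gseq p r α P c k l i' * (starRingEnd ℂ) (Gseq p r α P c' k' l i'))
            = (p ^ r : ℂ) *
              ((∏ j ∈ range r, (om p ^ (k / p ^ j % p) * (om p ^ (k' / p ^ j % p))⁻¹) ^
                  ((i' % p ^ r) / p ^ j % p)) *
               ∏ j ∈ range L,
                 Yfun P c c' j ^ ((i' / p ^ r) / (∏ t ∈ range j, Qfun P t) % Qfun P j)) := by
          intro i'
          have hsplit : ∀ l, Gseq p r α P c k l i' * (starRingEnd ℂ) (Gseq p r α P c' k' l i')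
              = (Skl p r α k l (i' % p ^ r) * (starRingEnd ℂ) (Skl p r α k' l (i' % p ^ r))) *
                ((∏ t : Fin L, om (P t) ^ (c t * mixDigit (p ^ r) P t i')) *
                 (starRingEnd ℂ) (∏ t : Fin L, om (P t) ^ (c' t * mixDigit (p ^ r) P t i'))) := by
            intro l
            rw [Gseq, Gseq, map_mul]
            simp only [om]
            ring
          rw [Finset.sum_congr rfl fun l _ => hsplit l, ← Finset.sum_mul,
            sum_l p r hr hα k k' _ _ (Nat.mod_lt _ hq) (Nat.mod_lt _ hq), if_pos rfl,
            Bdecomp p r P c c' i', Adecomp p r k k' (i' % p ^ r)]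
          ring
        rw [Finset.sum_congr rfl fun i' _ => hinner i', ← Finset.mul_sum]
        rw [show (∏ t : Fin L, P t) * p ^ r = p ^ r * ∏ t : Fin L, P t from mul_comm _ _]
        rw [sum_range_mul' _ (p ^ r) (∏ t : Fin L, P t)]
        have hterm2 : ∀ b ∈ range (∏ t : Fin L, P t), ∀ a ∈ range (p ^ r),
            ((∏ j ∈ range r, (om p ^ (k / p ^ j % p) * (om p ^ (k' / p ^ j % p))⁻¹) ^
                (((p ^ r * b + a) % p ^ r) / p ^ j % p)) *
             ∏ j ∈ range L,
               Yfun P c c' j ^ (((p ^ r * b + a) / p ^ r) / (∏ t ∈ range j, Qfun P t) % Qfun P j))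
            = (∏ j ∈ range r, (om p ^ (k / p ^ j % p) * (om p ^ (k' / p ^ j % p))⁻¹) ^
                (a / p ^ j % p)) *
              ∏ j ∈ range L,
                Yfun P c c' j ^ (b / (∏ t ∈ range j, Qfun P t) % Qfun P j) := by
          intro b hb a ha
          rw [Finset.mem_range] at ha
          rw [Nat.mul_add_mod, Nat.mod_eq_of_lt ha, Nat.mul_add_div hq,
            Nat.div_eq_of_lt ha, add_zero]
        rw [Finset.sum_congr rfl fun b hb => Finset.sum_congr rfl fun a ha => hterm2 b hb a ha]
        have hfact : ∑ b ∈ range (∏ t : Fin L, P t), ∑ a ∈ range (p ^ r),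
            ((∏ j ∈ range r, (om p ^ (k / p ^ j % p) * (om p ^ (k' / p ^ j % p))⁻¹) ^
                (a / p ^ j % p)) *
              ∏ j ∈ range L,
                Yfun P c c' j ^ (b / (∏ t ∈ range j, Qfun P t) % Qfun P j))
            = (∑ a ∈ range (p ^ r), ∏ j ∈ range r,
                (om p ^ (k / p ^ j % p) * (om p ^ (k' / p ^ j % p))⁻¹) ^ (a / p ^ j % p)) *
              ∑ b ∈ range (∏ t : Fin L, P t), ∏ j ∈ range L,
                Yfun P c c' j ^ (b / (∏ t ∈ range j, Qfun P t) % Qfun P j) := by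
          rw [Finset.sum_mul_sum]
          exact Finset.sum_comm
        rw [hfact]
        rcases hkc with hkk | hcc
        · rw [Asum_zero hp1 r k k' hk hk' hkk, zero_mul, mul_zero]
        · rw [Bsum_zero P hP c c' hc hc' hcc, mul_zero, mul_zero]
      · apply Finset.sum_eq_zero
        intro i' _
        have hne : i' % p ^ r ≠ (i' + τ) % p ^ r := by
          intro h
          have h2 : i' ≡ i' + τ [MOD p ^ r] := h
          have h3 := (Nat.modEq_iff_dvd' (Nat.le_add_right _ _)).1 h2
          rw [Nat.add_sub_cancel_left] at h3
          have := Nat.le_of_dvd (Nat.pos_of_ne_zero hτ0) h3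
          omega
        have hsplit : ∀ l, Gseq p r α P c k l i' * (starRingEnd ℂ) (Gseq p r α P c' k' l (i' + τ))
            = (Skl p r α k l (i' % p ^ r) * (starRingEnd ℂ) (Skl p r α k' l ((i' + τ) % p ^ r))) *
              ((∏ t : Fin L, om (P t) ^ (c t * mixDigit (p ^ r) P t i')) *
               (starRingEnd ℂ) (∏ t : Fin L, om (P t) ^ (c' t * mixDigit (p ^ r) P t (i' + τ)))) := by
          intro l
          rw [Gseq, Gseq, map_mul]
          simp only [om]
          ring
        rw [Finset.sum_congr rfl fun l _ => hsplit l, ← Finset.sum_mul,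
          sum_l p r hr hα k k' _ _ (Nat.mod_lt _ hq) (Nat.mod_lt _ hq), if_neg hne, zero_mul]
  · rw [Nat.mul_div_cancel _ hq, mul_comm]
end
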